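/- arXiv:1708.01966 — 6 statements merged into one kernel-verified Lean document; each statement's English description precedes it below -/
import Mathlib

section
/- Let H be a real Hilbert space, T > 0, M ≥ 2 an integer, Δt = T/M and t_m = mΔt, and let f : [0,T] → H be twice continuously differentiable. Then Δt · Σ_{m=1}^{M−1} ‖( f(t_{m+1}) − 2 f(t_m) + f(t_{m−1}) ) / Δt² ‖² ≤ (4/3) ∫₀^T ‖f''(t)‖² dt. -/
/-!
Taylor's formula with integral remainder at `t_m` writes the second difference
`f t_{m+1} - 2 f t_m + f t_{m-1}` as `∫ (τ - t_{m-1}) • f''` over `[t_{m-1}, t_m]` plus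
`∫ (t_{m+1} - τ) • f''` over `[t_m, t_{m+1}]`. Cauchy–Schwarz on each half (the weights have
`∫ τ² = Δt³ / 3`) and `(x + y)² ≤ 2 (x² + y²)` give
`Δt ‖second difference quotient‖² ≤ 2/3 ∫_{t_{m-1}}^{t_{m+1}} ‖f''‖²`.
Summing over `m` counts every cell `[t_k, t_{k+1}]` at most twice, whence `4/3`.
-/

open MeasureTheory Set
open scoped Interval ENNReal

theorem ContinuousOn.memLp_restrict_Ioc {F : Type*} [NormedAddCommGroup F] {a b : ℝ}
    {u : ℝ → F} (hu : ContinuousOn u (Icc a b)) (p : ℝ≥0∞) :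
    MemLp u p (volume.restrict (Ioc a b)) := by
  obtain ⟨C, hC⟩ := isCompact_Icc.exists_bound_of_continuousOn hu
  refine .of_bound ((hu.mono Ioc_subset_Icc_self).aestronglyMeasurable measurableSet_Ioc) C ?_
  exact (ae_restrict_iff' measurableSet_Ioc).2
    (.of_forall fun x hx => hC x (Ioc_subset_Icc_self hx))

section CauchySchwarz

variable {α E : Type*} [MeasurableSpace α] {μ : Measure α}
  [NormedAddCommGroup E] [NormedSpace ℝ E]

theorem norm_integral_smul_sq_le {w : α → ℝ} {g : α → E} (hw : MemLp w 2 μ) (hg : MemLp g 2 μ) :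
    ‖∫ x, w x • g x ∂μ‖ ^ 2 ≤ (∫ x, w x ^ 2 ∂μ) * ∫ x, ‖g x‖ ^ 2 ∂μ := by
  have holder := integral_mul_norm_le_Lp_mul_Lq .two_two (by simpa using hw)
    (by simpa using hg.norm)
  simp only [Real.rpow_two, Real.norm_eq_abs, sq_abs, abs_norm, ← Real.sqrt_eq_rpow] at holder
  calc ‖∫ x, w x • g x ∂μ‖ ^ 2
      ≤ (∫ x, |w x| * ‖g x‖ ∂μ) ^ 2 := by
        gcongr
        simpa only [norm_smul, Real.norm_eq_abs] using
          norm_integral_le_integral_norm (fun x => w x • g x)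
    _ ≤ (√(∫ x, w x ^ 2 ∂μ) * √(∫ x, ‖g x‖ ^ 2 ∂μ)) ^ 2 := by gcongr
    _ = (∫ x, w x ^ 2 ∂μ) * ∫ x, ‖g x‖ ^ 2 ∂μ := by
        rw [mul_pow, Real.sq_sqrt (integral_nonneg fun _ => sq_nonneg _),
          Real.sq_sqrt (integral_nonneg fun _ => sq_nonneg _)]

theorem norm_intervalIntegral_smul_sq_le {a b : ℝ} (hab : a ≤ b) {w : ℝ → ℝ} {g : ℝ → E}
    (hw : ContinuousOn w (Icc a b)) (hg : ContinuousOn g (Icc a b)) :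
    ‖∫ x in a..b, w x • g x‖ ^ 2 ≤ (∫ x in a..b, w x ^ 2) * ∫ x in a..b, ‖g x‖ ^ 2 := by
  simp only [intervalIntegral.integral_of_le hab]
  exact norm_integral_smul_sq_le (hw.memLp_restrict_Ioc 2) (hg.memLp_restrict_Ioc 2)

end CauchySchwarz

theorem sum_integral_le_integral_of_subset_Ico {g : ℝ → ℝ} {a : ℕ → ℝ} (ha : Monotone a)
    {s : Finset ℕ} {p n : ℕ} (hpn : p ≤ n) (hs : s ⊆ Finset.Ico p n)
    (hg : IntervalIntegrable g volume (a p) (a n)) (hg0 : ∀ x ∈ Icc (a p) (a n), 0 ≤ g x) :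
    ∑ k ∈ s, ∫ x in a k..a (k + 1), g x ≤ ∫ x in a p..a n, g x := by
  have piece_subset {k : ℕ} (hk : k ∈ Ico p n) : Icc (a k) (a (k + 1)) ⊆ Icc (a p) (a n) :=
    Icc_subset_Icc (ha hk.1) (ha hk.2)
  calc ∑ k ∈ s, ∫ x in a k..a (k + 1), g x
      ≤ ∑ k ∈ Finset.Ico p n, ∫ x in a k..a (k + 1), g x :=
        Finset.sum_le_sum_of_subset_of_nonneg hs fun k hk _ =>
          intervalIntegral.integral_nonneg (ha k.le_succ) fun x hx =>
            hg0 x (piece_subset (Finset.mem_Ico.1 hk) hx)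
    _ = ∫ x in a p..a n, g x :=
        intervalIntegral.sum_integral_adjacent_intervals_Ico hpn fun k hk =>
          hg.mono_set (by simpa only [uIcc_of_le (ha k.le_succ), uIcc_of_le (ha hpn)]
            using piece_subset hk)

theorem sum_integral_adjacent_cells_le {g : ℝ → ℝ} {h : ℝ} (hh : 0 ≤ h) (M : ℕ)
    (hg : IntervalIntegrable g volume 0 (M * h)) (hg0 : ∀ x ∈ Icc 0 (M * h), 0 ≤ g x) :
    ∑ m ∈ Finset.Icc 1 (M - 1), ((∫ x in m * h - h..m * h, g x) + ∫ x in m * h..m * h + h, g x)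
      ≤ 2 * ∫ x in 0..M * h, g x := by
  have hs {p n : ℕ} (hp : p ≤ 1) (hn : M ≤ n) : Finset.Icc 1 (M - 1) ⊆ Finset.Ico p n :=
    fun m hm => Finset.mem_Ico.2 (by have := Finset.mem_Icc.1 hm; omega)
  have left := sum_integral_le_integral_of_subset_Ico (g := g)
    (a := fun k : ℕ => (k : ℝ) * h - h) (p := 1) (n := M + 1)
    (fun k l hkl => by dsimp only; gcongr) (by omega) (hs le_rfl (by omega))
  have right := sum_integral_le_integral_of_subset_Ico (g := g)
    (a := fun k : ℕ => (k : ℝ) * h) (p := 0) (n := M)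
    (fun k l hkl => by dsimp only; gcongr) M.zero_le (hs zero_le_one le_rfl)
  simp only [Nat.cast_add, Nat.cast_one, Nat.cast_zero, add_one_mul, one_mul, zero_mul, sub_self,
    add_sub_cancel_right] at left right
  rw [Finset.sum_add_distrib, two_mul]
  exact add_le_add (left hg hg0) (right hg hg0)

section SecondDifference

variable {E : Type*} [NormedAddCommGroup E] [NormedSpace ℝ E] [CompleteSpace E]

theorem sub_sub_smul_eq_integral_sub_smul {f f' f'' : ℝ → E} {t s : ℝ}
    (hf : ∀ x ∈ [[t, s]], HasDerivWithinAt f (f' x) [[t, s]] x)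
    (hf' : ∀ x ∈ [[t, s]], HasDerivWithinAt f' (f'' x) [[t, s]] x)
    (hf'' : ContinuousOn f'' [[t, s]]) :
    f s - f t - (s - t) • f' t = ∫ τ in t..s, (s - τ) • f'' τ := by
  set G : ℝ → E := fun τ => f τ + (s - τ) • f' τ
  have hG : ∀ x ∈ [[t, s]], HasDerivWithinAt G ((s - x) • f'' x) [[t, s]] x := by
    intro x hx
    convert (hf x hx).add (((hasDerivWithinAt_id x _).const_sub s).smul (hf' x hx)) using 1
    · rfl
    · simp only [id_eq]
      module
  have hG_interior : ∀ x ∈ Ioo (min t s) (max t s),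
      HasDerivWithinAt G ((s - x) • f'' x) (Ioi x) x :=
    fun x hx => ((hG x (Ioo_subset_Icc_self hx)).hasDerivAt
      (Icc_mem_nhds hx.1 hx.2)).hasDerivWithinAt
  rw [intervalIntegral.integral_eq_sub_of_hasDeriv_right
    (fun x hx => (hG x hx).continuousWithinAt) hG_interior
    ((continuousOn_const.sub continuousOn_id).smul hf'').intervalIntegrable]
  simp only [G, sub_self, zero_smul, add_zero]
  abel

variable {f f' f'' : ℝ → E} {b h : ℝ}

theorem second_difference_eq_integral (hh : 0 ≤ h)
    (hf : ∀ x ∈ Icc (b - h) (b + h), HasDerivWithinAt f (f' x) (Icc (b - h) (b + h)) x)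
    (hf' : ∀ x ∈ Icc (b - h) (b + h), HasDerivWithinAt f' (f'' x) (Icc (b - h) (b + h)) x)
    (hf'' : ContinuousOn f'' (Icc (b - h) (b + h))) :
    f (b + h) - (2 : ℝ) • f b + f (b - h) =
      (∫ τ in b - h..b, (τ - (b - h)) • f'' τ) + ∫ τ in b..b + h, (b + h - τ) • f'' τ := by
  have taylor (s : ℝ) (hs : s ∈ Icc (b - h) (b + h)) :
      f s - f b - (s - b) • f' b = ∫ τ in b..s, (s - τ) • f'' τ := by
    have hsub : [[b, s]] ⊆ Icc (b - h) (b + h) :=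
      uIcc_subset_Icc ⟨by linarith, by linarith⟩ hs
    exact sub_sub_smul_eq_integral_sub_smul (fun x hx => (hf x (hsub hx)).mono hsub)
      (fun x hx => (hf' x (hsub hx)).mono hsub) (hf''.mono hsub)
  have left : ∫ τ in b..b - h, (b - h - τ) • f'' τ = ∫ τ in b - h..b, (τ - (b - h)) • f'' τ := by
    rw [intervalIntegral.integral_symm, ← intervalIntegral.integral_neg]
    simp only [← neg_smul, neg_sub]
  rw [← left, ← taylor (b - h) ⟨le_rfl, by linarith⟩, ← taylor (b + h) ⟨by linarith, le_rfl⟩]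
  module

theorem norm_second_difference_sq_le (hh : 0 ≤ h)
    (hf : ∀ x ∈ Icc (b - h) (b + h), HasDerivWithinAt f (f' x) (Icc (b - h) (b + h)) x)
    (hf' : ∀ x ∈ Icc (b - h) (b + h), HasDerivWithinAt f' (f'' x) (Icc (b - h) (b + h)) x)
    (hf'' : ContinuousOn f'' (Icc (b - h) (b + h))) :
    ‖f (b + h) - (2 : ℝ) • f b + f (b - h)‖ ^ 2 ≤
      2 * h ^ 3 / 3 * ((∫ τ in b - h..b, ‖f'' τ‖ ^ 2) + ∫ τ in b..b + h, ‖f'' τ‖ ^ 2) := by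
  have hl : b - h ≤ b := by linarith
  have hr : b ≤ b + h := by linarith
  have left := norm_intervalIntegral_smul_sq_le hl (w := fun τ => τ - (b - h))
    (continuousOn_id.sub continuousOn_const) (hf''.mono (Icc_subset_Icc_right hr))
  have right := norm_intervalIntegral_smul_sq_le hr (w := fun τ => b + h - τ)
    (continuousOn_const.sub continuousOn_id) (hf''.mono (Icc_subset_Icc_left hl))
  have weight_left : ∫ τ in b - h..b, (τ - (b - h)) ^ 2 = h ^ 3 / 3 := by
    norm_num [intervalIntegral.integral_comp_sub_right (· ^ 2)]
  have weight_right : ∫ τ in b..b + h, (b + h - τ) ^ 2 = h ^ 3 / 3 := by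
    norm_num [intervalIntegral.integral_comp_sub_left (· ^ 2)]
  rw [weight_left] at left
  rw [weight_right] at right
  rw [second_difference_eq_integral hh hf hf' hf'']
  calc _ ≤ (‖∫ τ in b - h..b, (τ - (b - h)) • f'' τ‖ +
          ‖∫ τ in b..b + h, (b + h - τ) • f'' τ‖) ^ 2 := by
        gcongr
        exact norm_add_le _ _
    _ ≤ 2 * (‖∫ τ in b - h..b, (τ - (b - h)) • f'' τ‖ ^ 2 +
          ‖∫ τ in b..b + h, (b + h - τ) • f'' τ‖ ^ 2) := add_sq_le
    _ ≤ _ := by linarith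

theorem mul_norm_second_difference_quotient_sq_le (hh : 0 < h)
    (hf : ∀ x ∈ Icc (b - h) (b + h), HasDerivWithinAt f (f' x) (Icc (b - h) (b + h)) x)
    (hf' : ∀ x ∈ Icc (b - h) (b + h), HasDerivWithinAt f' (f'' x) (Icc (b - h) (b + h)) x)
    (hf'' : ContinuousOn f'' (Icc (b - h) (b + h))) :
    h * ‖(h ^ 2)⁻¹ • (f (b + h) - (2 : ℝ) • f b + f (b - h))‖ ^ 2 ≤
      2 / 3 * ((∫ τ in b - h..b, ‖f'' τ‖ ^ 2) + ∫ τ in b..b + h, ‖f'' τ‖ ^ 2) := by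
  rw [norm_smul, mul_pow, norm_inv, norm_pow, Real.norm_of_nonneg hh.le]
  calc _ ≤ h * ((h ^ 2)⁻¹ ^ 2 * (2 * h ^ 3 / 3 *
          ((∫ τ in b - h..b, ‖f'' τ‖ ^ 2) + ∫ τ in b..b + h, ‖f'' τ‖ ^ 2))) := by
        gcongr
        exact norm_second_difference_sq_le hh.le hf hf' hf''
    _ = _ := by field_simp

end SecondDifference

theorem stmt8_general {H : Type*} [NormedAddCommGroup H] [InnerProductSpace ℝ H] [CompleteSpace H]
    (T : ℝ) (hT : 0 < T) (M : ℕ)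
    (f f' f'' : ℝ → H)
    (hf : ∀ s ∈ Set.Icc (0 : ℝ) T, HasDerivWithinAt f (f' s) (Set.Icc 0 T) s)
    (hf' : ∀ s ∈ Set.Icc (0 : ℝ) T, HasDerivWithinAt f' (f'' s) (Set.Icc 0 T) s)
    (hf'' : ContinuousOn f'' (Set.Icc 0 T)) :
    (T / M) * ∑ m ∈ Finset.Icc 1 (M - 1),
        ‖(((T / M) ^ 2)⁻¹ : ℝ) •
            (f (((m : ℝ) + 1) * (T / M)) - (2 : ℝ) • f ((m : ℝ) * (T / M))
              + f (((m : ℝ) - 1) * (T / M)))‖ ^ 2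
      ≤ (4 / 3) * ∫ s in (0 : ℝ)..T, ‖f'' s‖ ^ 2 := by
  have hJ : 0 ≤ ∫ s in (0 : ℝ)..T, ‖f'' s‖ ^ 2 :=
    intervalIntegral.integral_nonneg hT.le fun _ _ => sq_nonneg _
  rcases M.eq_zero_or_pos with rfl | hM
  · simpa using hJ
  set h := T / M with h_def
  have hh : 0 < h := by positivity
  have hMh : (M : ℝ) * h = T := by rw [h_def]; field_simp
  have window_subset {m : ℕ} (hm : m ∈ Finset.Icc 1 (M - 1)) :
      Icc ((m : ℝ) * h - h) (m * h + h) ⊆ Icc 0 T := by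
    have hm1 : (1 : ℝ) ≤ m := by exact_mod_cast (Finset.mem_Icc.1 hm).1
    have hmM : (m : ℝ) + 1 ≤ M := by exact_mod_cast (by grind : m + 1 ≤ M)
    exact Icc_subset_Icc (by nlinarith) (by nlinarith)
  simp only [Finset.mul_sum, add_one_mul, sub_one_mul]
  calc _ ≤ ∑ m ∈ Finset.Icc 1 (M - 1), 2 / 3 * ((∫ τ in m * h - h..m * h, ‖f'' τ‖ ^ 2) +
          ∫ τ in m * h..m * h + h, ‖f'' τ‖ ^ 2) :=
        Finset.sum_le_sum fun m hm => mul_norm_second_difference_quotient_sq_le hh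
          (fun x hx => (hf x (window_subset hm hx)).mono (window_subset hm))
          (fun x hx => (hf' x (window_subset hm hx)).mono (window_subset hm))
          (hf''.mono (window_subset hm))
    _ ≤ 2 / 3 * (2 * ∫ τ in 0..M * h, ‖f'' τ‖ ^ 2) := by
        rw [← Finset.mul_sum]
        gcongr
        refine sum_integral_adjacent_cells_le hh.le M ?_ fun _ _ => sq_nonneg _
        rw [hMh]
        exact (hf''.norm.pow 2).intervalIntegrable_of_Icc hT.le
    _ = _ := by rw [hMh]; ring

/-- Discrete estimate from Lemma 3.4 of the paper: with `Δt = T/M` and `t_m = mΔt`,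
`Δt Σ_{m=1}^{M−1} ‖(f(t_{m+1}) − 2f(t_m) + f(t_{m−1}))/Δt²‖² ≤ (4/3) ∫₀^T ‖f''‖²`. -/
theorem stmt8 {H : Type*} [NormedAddCommGroup H] [InnerProductSpace ℝ H] [CompleteSpace H]
    (T : ℝ) (hT : 0 < T) (M : ℕ) (hM : 2 ≤ M)
    (f f' f'' : ℝ → H)
    (hf : ∀ s ∈ Set.Icc (0 : ℝ) T, HasDerivWithinAt f (f' s) (Set.Icc 0 T) s)
    (hf' : ∀ s ∈ Set.Icc (0 : ℝ) T, HasDerivWithinAt f' (f'' s) (Set.Icc 0 T) s)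
    (hf'' : ContinuousOn f'' (Set.Icc 0 T)) :
    (T / M) * ∑ m ∈ Finset.Icc 1 (M - 1),
        ‖(((T / M) ^ 2)⁻¹ : ℝ) •
            (f (((m : ℝ) + 1) * (T / M)) - (2 : ℝ) • f ((m : ℝ) * (T / M))
              + f (((m : ℝ) - 1) * (T / M)))‖ ^ 2
      ≤ (4 / 3) * ∫ s in (0 : ℝ)..T, ‖f'' s‖ ^ 2 :=
  stmt8_general T hT M f f' f'' hf hf' hf''
end

section
/- Let E be a real Banach space, let t ∈ ℝ and h > 0, and let f : ℝ → E be three times continuously differentiable on [t − h, t + h]. Then (1/4) f''(t + h) + (1/2) f''(t) + (1/4) f''(t − h) − ( f(t + h) − 2 f(t) + f(t − h) ) / h² = (1/4) ∫₀^{h} (1 − 2(1 − τ/h)²) f'''(t + τ) dτ − (1/4) ∫_{−h}^{0} (1 − 2(1 + τ/h)²) f'''(t + τ) dτ. -/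
/-!
Integrating by parts three times against the quadratic kernel `1 - 2 (1 - τ/k)²` leaves only
boundary terms in `f''`, `f'` and `f`. For the steps `k = h` and `k = -h` this gives
`f''(t + k) + f''(t) - (4 / k²) (f(t + k) - f(t) - k f'(t))`, and in the average of the two
the `f'(t)` terms cancel, leaving the consistency error.
-/

open Set intervalIntegral

section ThirdDerivative

variable {E : Type*} [NormedAddCommGroup E] [NormedSpace ℝ E] [CompleteSpace E]

theorem integral_eq_sub_of_hasDerivWithinAt_uIcc {s : Set ℝ} {a b : ℝ} {g g' : ℝ → E}
    (hs : uIcc a b ⊆ s) (hg : ∀ x ∈ uIcc a b, HasDerivWithinAt g (g' x) s x)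
    (hg' : ContinuousOn g' (uIcc a b)) : ∫ x in a..b, g' x = g b - g a :=
  integral_eq_sub_of_hasDeriv_right (fun x hx => (hg x hx).continuousWithinAt.mono hs)
    (fun x hx => ((hg x (mem_Icc_of_Ioo hx)).hasDerivAt
      (Filter.mem_of_superset (Icc_mem_nhds hx.1 hx.2) hs)).hasDerivWithinAt)
    hg'.intervalIntegrable

variable {s : Set ℝ} {f f' f'' f''' : ℝ → E}

/-- Integration by parts three times, which terminates because `p'' = c` is constant. -/
theorem integral_smul_third_deriv_eq_sub {a b c : ℝ} {p p' : ℝ → ℝ}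
    (hp : ∀ x, HasDerivAt p (p' x) x) (hp' : ∀ x, HasDerivAt p' c x) (hs : uIcc a b ⊆ s)
    (hf : ∀ x ∈ uIcc a b, HasDerivWithinAt f (f' x) s x)
    (hf' : ∀ x ∈ uIcc a b, HasDerivWithinAt f' (f'' x) s x)
    (hf'' : ∀ x ∈ uIcc a b, HasDerivWithinAt f'' (f''' x) s x)
    (hf''' : ContinuousOn f''' (uIcc a b)) :
    ∫ x in a..b, p x • f''' x
      = (p b • f'' b - p' b • f' b + c • f b) - (p a • f'' a - p' a • f' a + c • f a) := by
  refine integral_eq_sub_of_hasDerivWithinAt_uIcc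
    (g := fun x => p x • f'' x - p' x • f' x + c • f x) hs (fun x hx => ?_)
    ((continuous_iff_continuousAt.2 fun x => (hp x).continuousAt).continuousOn.smul hf''')
  refine HasDerivWithinAt.congr_deriv ((((hp x).hasDerivWithinAt.smul (hf'' x hx)).sub
    ((hp' x).hasDerivWithinAt.smul (hf' x hx))).add ((hf x hx).const_smul c)) ?_
  module

theorem integral_consistency_kernel_smul_eq {t k : ℝ} (hk : k ≠ 0) (hs : uIcc t (t + k) ⊆ s)
    (hf : ∀ x ∈ uIcc t (t + k), HasDerivWithinAt f (f' x) s x)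
    (hf' : ∀ x ∈ uIcc t (t + k), HasDerivWithinAt f' (f'' x) s x)
    (hf'' : ∀ x ∈ uIcc t (t + k), HasDerivWithinAt f'' (f''' x) s x)
    (hf''' : ContinuousOn f''' (uIcc t (t + k))) :
    ∫ τ in (0 : ℝ)..k, (1 - 2 * (1 - τ / k) ^ 2) • f''' (t + τ)
      = f'' (t + k) + f'' t - (4 / k ^ 2) • (f (t + k) - f t - k • f' t) := by
  set p : ℝ → ℝ := fun x => 1 - 2 * (1 - (x - t) / k) ^ 2
  have hp : ∀ x, HasDerivAt p (4 / k * (1 - (x - t) / k)) x := by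
    intro x
    refine HasDerivAt.congr_deriv
      ((((((hasDerivAt_id x).sub_const t).div_const k).const_sub 1).pow 2).const_mul 2
        |>.const_sub 1) ?_
    simp only [id]
    ring
  have hp' : ∀ x, HasDerivAt (fun x => 4 / k * (1 - (x - t) / k)) (-4 / k ^ 2) x := by
    intro x
    refine HasDerivAt.congr_deriv
      (((((hasDerivAt_id x).sub_const t).div_const k).const_sub 1).const_mul (4 / k)) ?_
    ring
  have hshift := integral_comp_add_left (fun x => p x • f''' x) t (a := 0) (b := k)
  simp only [p, add_sub_cancel_left, add_zero] at hshift
  rw [hshift, integral_smul_third_deriv_eq_sub hp hp' hs hf hf' hf'' hf''']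
  simp only [p, add_sub_cancel_left, sub_self, div_self hk]
  match_scalars <;> field_simp <;> ring

end ThirdDerivative

/-- Integral representation (via the third derivative) of the consistency error of
the implicit (1/4, 1/2, 1/4) time-stepping scheme, from Lemma 3.4 of the paper. -/
theorem stmt9 {E : Type*} [NormedAddCommGroup E] [NormedSpace ℝ E] [CompleteSpace E]
    (t h : ℝ) (hh : 0 < h)
    (f f' f'' f''' : ℝ → E)
    (hf : ∀ s ∈ Set.Icc (t - h) (t + h), HasDerivWithinAt f (f' s) (Set.Icc (t - h) (t + h)) s)
    (hf' : ∀ s ∈ Set.Icc (t - h) (t + h), HasDerivWithinAt f' (f'' s) (Set.Icc (t - h) (t + h)) s)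
    (hf'' : ∀ s ∈ Set.Icc (t - h) (t + h),
      HasDerivWithinAt f'' (f''' s) (Set.Icc (t - h) (t + h)) s)
    (hf''' : ContinuousOn f''' (Set.Icc (t - h) (t + h))) :
    (1 / 4 : ℝ) • f'' (t + h) + (1 / 2 : ℝ) • f'' t + (1 / 4 : ℝ) • f'' (t - h)
        - ((h ^ 2)⁻¹ : ℝ) • (f (t + h) - (2 : ℝ) • f t + f (t - h))
      = (1 / 4 : ℝ) • (∫ τ in (0 : ℝ)..h, (1 - 2 * (1 - τ / h) ^ 2) • f''' (t + τ))
        - (1 / 4 : ℝ) • (∫ τ in (-h)..(0 : ℝ), (1 - 2 * (1 + τ / h) ^ 2) • f''' (t + τ)) := by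
  have one_sided : ∀ k : ℝ, k ≠ 0 → |k| ≤ h →
      ∫ τ in (0 : ℝ)..k, (1 - 2 * (1 - τ / k) ^ 2) • f''' (t + τ)
        = f'' (t + k) + f'' t - (4 / k ^ 2) • (f (t + k) - f t - k • f' t) := by
    intro k hk hkh
    obtain ⟨hk_ge, hk_le⟩ := abs_le.1 hkh
    have hsub : uIcc t (t + k) ⊆ Icc (t - h) (t + h) :=
      uIcc_subset_Icc ⟨by linarith, by linarith⟩ ⟨by linarith, by linarith⟩
    exact integral_consistency_kernel_smul_eq hk hsub (fun x hx => hf x (hsub hx))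
      (fun x hx => hf' x (hsub hx)) (fun x hx => hf'' x (hsub hx)) (hf'''.mono hsub)
  have reflect : ∫ τ in (-h)..(0 : ℝ), (1 - 2 * (1 + τ / h) ^ 2) • f''' (t + τ)
      = -∫ τ in (0 : ℝ)..-h, (1 - 2 * (1 - τ / -h) ^ 2) • f''' (t + τ) := by
    simp only [integral_symm (-h), div_neg, sub_neg_eq_add, neg_neg]
  rw [reflect, one_sided h hh.ne' (abs_of_pos hh).le,
    one_sided (-h) (neg_ne_zero.2 hh.ne') (by simp [abs_of_pos hh]), ← sub_eq_add_neg]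
  match_scalars <;> field_simp <;> ring
end

section
/- Let E be a real Banach space, let t ∈ ℝ and h > 0, and let f : ℝ → E be four times continuously differentiable on [t − h, t + h]. Then (1/4) f''(t + h) + (1/2) f''(t) + (1/4) f''(t − h) − ( f(t + h) − 2 f(t) + f(t − h) ) / h² = (1/12) ∫_{−h}^{h} (h − |τ|) ( 3 − 2 (1 − |τ|/h)² ) f''''(t + τ) dτ. -/
/-!
On `[0, h]` the kernel equals `3 (h - τ) - 2 (h - τ)³ / h²`, a combination of the Taylor
remainder weights `h - τ` and `(h - τ)³ / 3!`, and on `[-h, 0]` it is the same expression with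
`h` replaced by `-h` (up to the orientation of the integral). Taylor's formula with integral
remainder, for `f''` to first order and for `f` to third order, expanded at `t` towards `t ± h`,
turns each half of the integral into values of `f, …, f'''`; in the sum of the two halves the
terms in `f' t` and `f''' t` cancel.
-/

open Set Finset Nat intervalIntegral MeasureTheory
open scoped Interval

section

variable {E : Type*} [NormedAddCommGroup E] [NormedSpace ℝ E]

theorem taylor_integral_remainder_of_hasDerivWithinAt [CompleteSpace E]
    {F : ℕ → ℝ → E} {a b : ℝ} {n : ℕ}
    (hF : ∀ k ≤ n, ∀ x ∈ [[a, b]], HasDerivWithinAt (F k) (F (k + 1) x) [[a, b]] x)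
    (hc : ContinuousOn (F (n + 1)) [[a, b]]) :
    ∫ x in a..b, ((b - x) ^ n / n !) • F (n + 1) x
      = F 0 b - ∑ k ∈ range (n + 1), ((b - a) ^ k / k !) • F k a := by
  induction n with
  | zero =>
    simp only [pow_zero, factorial_zero, cast_one, div_one, one_smul, zero_add,
      Finset.range_one, sum_singleton]
    exact integral_eq_sub_of_hasDeriv_right (fun x hx => (hF 0 le_rfl x hx).continuousWithinAt)
      (fun x hx => ((hF 0 le_rfl x (mem_Icc_of_Ioo hx)).hasDerivAt
        (Icc_mem_nhds hx.1 hx.2)).hasDerivWithinAt) hc.intervalIntegrable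
  | succ n ih =>
    have hcn : ContinuousOn (F (n + 1)) [[a, b]] :=
      fun x hx => (hF (n + 1) le_rfl x hx).continuousWithinAt
    have hweight : ∀ x ∈ [[a, b]], HasDerivWithinAt (fun y => (b - y) ^ (n + 1) / (n + 1)!)
        (-((b - x) ^ n / n !)) [[a, b]] x := fun x _ =>
      ((((hasDerivAt_id x).const_sub b).fun_pow (n + 1)).div_const ((n + 1)! : ℝ))
        |>.hasDerivWithinAt.congr_deriv (by push_cast [factorial_succ, id]; field_simp)
    rw [integral_smul_deriv_eq_deriv_smul_of_hasDerivWithinAt hweight (hF (n + 1) le_rfl)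
      (Continuous.intervalIntegrable (by fun_prop) _ _) hc.intervalIntegrable]
    simp only [neg_smul, intervalIntegral.integral_neg, sub_neg_eq_add,
      ih (fun k hk => hF k (by omega)) hcn]
    rw [sum_range_succ _ (n + 1), sub_self, zero_pow (succ_ne_zero n), zero_div, zero_smul,
      zero_sub]
    abel

theorem integral_cubic_kernel_smul_eq_of_hasDerivWithinAt [CompleteSpace E]
    {F : ℕ → ℝ → E} {t c : ℝ} (hc₀ : c ≠ 0)
    (hF : ∀ k ≤ 3, ∀ x ∈ [[t, t + c]], HasDerivWithinAt (F k) (F (k + 1) x) [[t, t + c]] x)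
    (hc : ContinuousOn (F 4) [[t, t + c]]) :
    ∫ τ in 0..c, (3 * (c - τ) - 2 * (c - τ) ^ 3 / c ^ 2) • F 4 (t + τ)
      = (3 : ℝ) • F 2 (t + c) + (3 : ℝ) • F 2 t - c • F 3 t
        - (12 / c ^ 2) • (F 0 (t + c) - F 0 t - c • F 1 t) := by
  have taylor₁ := taylor_integral_remainder_of_hasDerivWithinAt (F := fun k => F (k + 2))
    (n := 1) (fun k hk => hF (k + 2) (by omega)) hc
  have taylor₃ := taylor_integral_remainder_of_hasDerivWithinAt (n := 3) hF hc
  have hint (n : ℕ) (r : ℝ) :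
      IntervalIntegrable (fun x => r • (((t + c - x) ^ n / n !) • F 4 x)) volume t (t + c) :=
    (continuousOn_const.smul ((by fun_prop : Continuous _).continuousOn.smul hc)).intervalIntegrable
  calc ∫ τ in 0..c, (3 * (c - τ) - 2 * (c - τ) ^ 3 / c ^ 2) • F 4 (t + τ)
      = ∫ x in t..t + c, (3 * (t + c - x) - 2 * (t + c - x) ^ 3 / c ^ 2) • F 4 x := by
        simpa only [add_zero, add_sub_add_left_eq_sub] using integral_comp_add_left
          (fun x => (3 * (t + c - x) - 2 * (t + c - x) ^ 3 / c ^ 2) • F 4 x) t (a := 0) (b := c)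
    _ = ∫ x in t..t + c, (3 : ℝ) • (((t + c - x) ^ 1 / 1 !) • F 4 x)
          - (12 / c ^ 2 : ℝ) • (((t + c - x) ^ 3 / 3 !) • F 4 x) := by
        refine integral_congr fun x _ => ?_
        match_scalars
        simp only [factorial]
        field_simp
        ring
    _ = _ := by
        rw [integral_sub (hint 1 _) (hint 3 _), intervalIntegral.integral_smul,
          intervalIntegral.integral_smul, taylor₁, taylor₃]
        simp only [sum_range_succ, sum_range_zero, add_sub_cancel_left, factorial, cast_one,
          succ_eq_add_one, zero_add, mul_one, pow_zero, pow_one, div_one]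
        match_scalars <;> field_simp <;> ring

theorem integral_abs_kernel_smul_eq_add {G : ℝ → E} {h : ℝ} (hh : 0 < h)
    (hG : IntervalIntegrable G volume (-h) h) :
    ∫ τ in (-h)..h, ((h - |τ|) * (3 - 2 * (1 - |τ| / h) ^ 2)) • G τ
      = (∫ τ in 0..h, (3 * (h - τ) - 2 * (h - τ) ^ 3 / h ^ 2) • G τ)
        + ∫ τ in 0..-h, (3 * (-h - τ) - 2 * (-h - τ) ^ 3 / (-h) ^ 2) • G τ := by
  have hint : IntervalIntegrable (fun τ => ((h - |τ|) * (3 - 2 * (1 - |τ| / h) ^ 2)) • G τ)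
      volume (-h) h :=
    hG.continuousOn_smul (by fun_prop)
  rw [← integral_add_adjacent_intervals (b := 0)
      (hint.mono_set (uIcc_subset_uIcc_left (by simp [hh.le])))
      (hint.mono_set (uIcc_subset_uIcc_right (by simp [hh.le]))),
    add_comm, integral_symm (-h) 0, ← intervalIntegral.integral_neg]
  congr 1
  · refine integral_congr fun τ hτ => ?_
    rw [Set.uIcc_of_le hh.le] at hτ
    rw [abs_of_nonneg hτ.1]
    congr 1
    field_simp
  · refine integral_congr fun τ hτ => ?_
    rw [Set.uIcc_of_le (by linarith)] at hτ
    rw [abs_of_nonpos hτ.2, ← neg_smul]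
    congr 1
    field_simp
    ring

end

/-- Integral representation (via the fourth derivative) of the consistency error of
the implicit (1/4, 1/2, 1/4) time-stepping scheme, from Lemma 3.4 of the paper. -/
theorem stmt10 {E : Type*} [NormedAddCommGroup E] [NormedSpace ℝ E] [CompleteSpace E]
    (t h : ℝ) (hh : 0 < h)
    (f f' f'' f''' f'''' : ℝ → E)
    (hf : ∀ s ∈ Set.Icc (t - h) (t + h), HasDerivWithinAt f (f' s) (Set.Icc (t - h) (t + h)) s)
    (hf' : ∀ s ∈ Set.Icc (t - h) (t + h), HasDerivWithinAt f' (f'' s) (Set.Icc (t - h) (t + h)) s)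
    (hf'' : ∀ s ∈ Set.Icc (t - h) (t + h),
      HasDerivWithinAt f'' (f''' s) (Set.Icc (t - h) (t + h)) s)
    (hf''' : ∀ s ∈ Set.Icc (t - h) (t + h),
      HasDerivWithinAt f''' (f'''' s) (Set.Icc (t - h) (t + h)) s)
    (hf'''' : ContinuousOn f'''' (Set.Icc (t - h) (t + h))) :
    (1 / 4 : ℝ) • f'' (t + h) + (1 / 2 : ℝ) • f'' t + (1 / 4 : ℝ) • f'' (t - h)
        - ((h ^ 2)⁻¹ : ℝ) • (f (t + h) - (2 : ℝ) • f t + f (t - h))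
      = (1 / 12 : ℝ) •
          ∫ τ in (-h)..h, ((h - |τ|) * (3 - 2 * (1 - |τ| / h) ^ 2)) • f'''' (t + τ) := by
  let F : ℕ → ℝ → E := fun k => [f, f', f'', f''', f''''].getD k 0
  have hsub (c : ℝ) (hc : |c| = h) : [[t, t + c]] ⊆ Icc (t - h) (t + h) :=
    uIcc_subset_Icc ⟨by linarith, by linarith⟩
      ⟨by linarith [neg_abs_le c], by linarith [le_abs_self c]⟩
  have expand (c : ℝ) (hc : |c| = h) := integral_cubic_kernel_smul_eq_of_hasDerivWithinAt
    (F := F) (abs_pos.mp (hc ▸ hh)) (fun k hk x hx => by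
      have hx' := hsub c hc hx
      interval_cases k
      exacts [(hf x hx').mono (hsub c hc), (hf' x hx').mono (hsub c hc),
        (hf'' x hx').mono (hsub c hc), (hf''' x hx').mono (hsub c hc)])
    (hf''''.mono (hsub c hc))
  simp only [F, List.getD_cons_succ, List.getD_cons_zero] at expand
  have hshift : ContinuousOn (fun τ => f'''' (t + τ)) (Icc (-h) h) :=
    hf''''.comp (by fun_prop) fun τ hτ => ⟨by linarith [hτ.1], by linarith [hτ.2]⟩
  rw [integral_abs_kernel_smul_eq_add hh (hshift.intervalIntegrable_of_Icc (by linarith)),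
    expand h (abs_of_pos hh), expand (-h) (by simp [hh.le]), ← sub_eq_add_neg]
  match_scalars <;> field_simp <;> ring
end

section
/- There exists a constant c > 0 such that for every real Hilbert space H, every T > 0, every integer M ≥ 2, with Δt = T/M and t_m = mΔt, and every three times continuously differentiable f : [0,T] → H, one has Δt · Σ_{m=1}^{M−1} ‖ s_m ‖² ≤ c Δt² ∫₀^T ‖f'''(t)‖² dt, where s_m = (1/4) f''(t_{m+1}) + (1/2) f''(t_m) + (1/4) f''(t_{m−1}) − ( f(t_{m+1}) − 2 f(t_m) + f(t_{m−1}) ) / Δt². -/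
/-!
Around a node `c` the error `s` splits into two one-sided pieces, towards `e = c + h` and
`e = c - h`. Taylor's formula with integral remainder turns each piece into `∫_c^e K • f'''` with
the weight `K t = 1/4 - (e - t)² / (2 (e - c)²)`, and `|K| ≤ 1/4`. Hence
`‖s‖ ≤ 1/4 ∫_{c-h}^{c+h} ‖f'''‖`, and Cauchy–Schwarz gives `‖s‖² ≤ h/8 ∫_{c-h}^{c+h} ‖f'''‖²`.
Each cell of the grid lies in two of the windows `[t_{m-1}, t_{m+1}]`, so the estimate holds
with the constant `1/4`.
-/

open intervalIntegral MeasureTheory Set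

theorem sq_intervalIntegral_le {g : ℝ → ℝ} {a b : ℝ} (hab : a ≤ b)
    (hg : IntervalIntegrable g volume a b)
    (hg2 : IntervalIntegrable (fun t => g t ^ 2) volume a b) :
    (∫ t in a..b, g t) ^ 2 ≤ (b - a) * ∫ t in a..b, g t ^ 2 := by
  have hquad : ∀ x : ℝ,
      0 ≤ (b - a) * (x * x) + (-2 * ∫ t in a..b, g t) * x + ∫ t in a..b, g t ^ 2 := by
    intro x
    have hexpand : ∫ t in a..b, (g t - x) ^ 2
        = (b - a) * (x * x) + (-2 * ∫ t in a..b, g t) * x + ∫ t in a..b, g t ^ 2 := by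
      have : (fun t => (g t - x) ^ 2) = fun t => g t ^ 2 - (2 * x) * g t + x ^ 2 := by
        funext t; ring
      rw [this, intervalIntegral.integral_add (hg2.sub (hg.const_mul _)) intervalIntegrable_const,
        intervalIntegral.integral_sub hg2 (hg.const_mul _), intervalIntegral.integral_const_mul,
        intervalIntegral.integral_const, smul_eq_mul]
      ring
    rw [← hexpand]
    exact integral_nonneg hab fun t _ => sq_nonneg _
  have hdiscrim := discrim_le_zero hquad
  rw [discrim] at hdiscrim
  linarith

theorem sum_integral_overlapping_cells_le {G : ℝ → ℝ} {h : ℝ} {M : ℕ} (hh : 0 ≤ h)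
    (hG : ∀ t, 0 ≤ G t) (hint : IntervalIntegrable G volume 0 (M * h)) :
    ∑ m ∈ Finset.Icc 1 (M - 1), ∫ t in (m : ℝ) * h - h..(m : ℝ) * h + h, G t
      ≤ 2 * ∫ t in (0 : ℝ)..M * h, G t := by
  set B : ℕ → ℝ := fun k => ∫ t in (k : ℝ) * h..((k : ℝ) + 1) * h, G t
  have hB : ∀ k, 0 ≤ B k := fun k => integral_nonneg (by gcongr; linarith) fun t _ => hG t
  have hcell : ∀ k ≤ M, ∀ l ≤ M,
      IntervalIntegrable G volume ((k : ℝ) * h) ((l : ℝ) * h) := by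
    intro k hk l hl
    refine hint.mono_set (uIcc_subset_uIcc ?_ ?_) <;> rw [uIcc_of_le (by positivity)] <;>
      exact ⟨by positivity, by gcongr⟩
  have htotal : ∑ k ∈ Finset.range M, B k = ∫ t in (0 : ℝ)..M * h, G t := by
    simpa [B] using sum_integral_adjacent_intervals (a := fun k : ℕ => (k : ℝ) * h)
      fun k hk => hcell k hk.le (k + 1) hk
  have hsplit : ∀ k < M - 1,
      ∫ t in ((k + 1 : ℕ) : ℝ) * h - h..((k + 1 : ℕ) : ℝ) * h + h, G t
        = B k + B (k + 1) := by
    intro k hk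
    have hlo : ((k + 1 : ℕ) : ℝ) * h - h = (k : ℝ) * h := by push_cast; ring
    have hhi : ((k + 1 : ℕ) : ℝ) * h + h = ((k + 2 : ℕ) : ℝ) * h := by push_cast; ring
    rw [hlo, hhi, ← integral_add_adjacent_intervals (hcell k (by omega) (k + 1) (by omega))
      (hcell (k + 1) (by omega) (k + 2) (by omega))]
    simp only [B]
    push_cast
    ring_nf
  rw [← Finset.Ico_add_one_right_eq_Icc, Finset.sum_Ico_eq_sum_range, Nat.add_sub_cancel]
  calc _ = ∑ k ∈ Finset.range (M - 1), B k + ∑ k ∈ Finset.range (M - 1), B (k + 1) := by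
        rw [← Finset.sum_add_distrib]
        refine Finset.sum_congr rfl fun k hk => ?_
        rw [add_comm 1 k, hsplit k (Finset.mem_range.mp hk)]
    _ ≤ ∑ k ∈ Finset.range M, B k + ∑ k ∈ Finset.range M, B k := by
        gcongr ?_ + ?_
        · exact Finset.sum_le_sum_of_subset_of_nonneg (Finset.range_subset_range.mpr (by omega))
            fun k _ _ => hB k
        · rcases Nat.eq_zero_or_pos M with rfl | hM
          · simp
          · rw [← Nat.sub_add_cancel hM, Finset.sum_range_succ', Nat.add_sub_cancel]
            linarith [hB 0]
    _ = 2 * ∫ t in (0 : ℝ)..M * h, G t := by rw [htotal]; ring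

noncomputable def consistencyKernel (c e t : ℝ) : ℝ :=
  1 / 4 - (e - t) ^ 2 / (2 * (e - c) ^ 2)

theorem abs_consistencyKernel_le {c e t : ℝ} (ht : t ∈ uIcc c e) :
    |consistencyKernel c e t| ≤ 1 / 4 := by
  have hsq : (e - t) ^ 2 ≤ (e - c) ^ 2 := sq_le_sq.mpr (abs_sub_right_of_mem_uIcc ht)
  have hhalf : (e - t) ^ 2 / (2 * (e - c) ^ 2) ≤ 1 / 2 := by
    rcases eq_or_ne ((e - c) ^ 2) 0 with h0 | h0
    · simp [h0]
    · rw [div_le_iff₀ (by positivity)]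
      linarith
  have hnonneg : 0 ≤ (e - t) ^ 2 / (2 * (e - c) ^ 2) := by positivity
  rw [consistencyKernel, abs_le]
  constructor <;> linarith

section ConsistencyError

variable {E : Type*} [NormedAddCommGroup E] [NormedSpace ℝ E]
  {f f' f'' f''' : ℝ → E} {s : Set ℝ} {c e : ℝ}

noncomputable def consistencyError (f f'' : ℝ → E) (c h : ℝ) : E :=
  (1 / 4 : ℝ) • f'' (c + h) + (1 / 2 : ℝ) • f'' c + (1 / 4 : ℝ) • f'' (c - h)
    - ((h ^ 2)⁻¹ : ℝ) • (f (c + h) - (2 : ℝ) • f c + f (c - h))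

noncomputable def oneSidedConsistencyError (f f' f'' : ℝ → E) (c e : ℝ) : E :=
  (1 / 4 : ℝ) • (f'' e - f'' c)
    - ((e - c) ^ 2)⁻¹ • (f e - f c - (e - c) • f' c - ((e - c) ^ 2 / 2) • f'' c)

theorem consistencyError_eq_add {h : ℝ} (hh : h ≠ 0) :
    consistencyError f f'' c h = oneSidedConsistencyError f f' f'' c (c + h)
      + oneSidedConsistencyError f f' f'' c (c - h) := by
  have hhalf : (h ^ 2)⁻¹ * (h ^ 2 / 2) = 1 / 2 := by field_simp
  simp only [consistencyError, oneSidedConsistencyError, add_sub_cancel_left,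
    sub_sub_cancel_left, neg_sq, smul_sub, smul_smul, hhalf]
  module

variable [CompleteSpace E]

theorem integral_eq_sub_of_hasDerivWithinAt_of_uIcc_subset {g g' : ℝ → E} {a b : ℝ}
    (hs : uIcc a b ⊆ s) (hg : ∀ t ∈ s, HasDerivWithinAt g (g' t) s t)
    (hint : IntervalIntegrable g' volume a b) :
    ∫ t in a..b, g' t = g b - g a :=
  integral_eq_sub_of_hasDeriv_right (fun t ht => (hg t (hs ht)).continuousWithinAt.mono hs)
    (fun t ht => ((hg t (hs (Ioo_subset_Icc_self ht))).hasDerivAt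
      (Filter.mem_of_superset (Icc_mem_nhds ht.1 ht.2) hs)).hasDerivWithinAt)
    hint

theorem taylor_integral_remainder_two (hs : uIcc c e ⊆ s)
    (hf : ∀ t ∈ s, HasDerivWithinAt f (f' t) s t)
    (hf' : ∀ t ∈ s, HasDerivWithinAt f' (f'' t) s t)
    (hf'' : ∀ t ∈ s, HasDerivWithinAt f'' (f''' t) s t)
    (hint : IntervalIntegrable f''' volume c e) :
    ∫ t in c..e, ((e - t) ^ 2 / 2) • f''' t
      = f e - f c - (e - c) • f' c - ((e - c) ^ 2 / 2) • f'' c := by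
  have hderiv : ∀ t ∈ s, HasDerivWithinAt
      (fun x => f x + (e - x) • f' x + ((e - x) ^ 2 / 2) • f'' x)
      (((e - t) ^ 2 / 2) • f''' t) s t := by
    intro t ht
    have hlin : HasDerivWithinAt (fun x : ℝ => e - x) (-1) s t :=
      (hasDerivWithinAt_id t _).const_sub e
    have hquad : HasDerivWithinAt (fun x : ℝ => (e - x) ^ 2 / 2) (-(e - t)) s t :=
      ((hlin.fun_pow 2).div_const 2).congr_deriv (by push_cast; ring)
    exact (((hf t ht).fun_add (hlin.fun_smul (hf' t ht))).fun_add
      (hquad.fun_smul (hf'' t ht))).congr_deriv (by module)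
  rw [integral_eq_sub_of_hasDerivWithinAt_of_uIcc_subset hs hderiv
    (hint.continuousOn_smul (by fun_prop))]
  simp only [sub_self, zero_smul, add_zero, ne_eq, OfNat.ofNat_ne_zero, not_false_eq_true,
    zero_pow, zero_div]
  abel

theorem oneSidedConsistencyError_eq_integral (hs : uIcc c e ⊆ s)
    (hf : ∀ t ∈ s, HasDerivWithinAt f (f' t) s t)
    (hf' : ∀ t ∈ s, HasDerivWithinAt f' (f'' t) s t)
    (hf'' : ∀ t ∈ s, HasDerivWithinAt f'' (f''' t) s t)
    (hint : IntervalIntegrable f''' volume c e) :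
    oneSidedConsistencyError f f' f'' c e = ∫ t in c..e, consistencyKernel c e t • f''' t := by
  have hkernel : ∀ t, consistencyKernel c e t • f''' t
      = (1 / 4 : ℝ) • f''' t - ((e - c) ^ 2)⁻¹ • (((e - t) ^ 2 / 2) • f''' t) := by
    intro t
    rw [consistencyKernel, sub_smul, smul_smul]
    congr 2
    field_simp
  have hrem : IntervalIntegrable (fun t => ((e - t) ^ 2 / 2) • f''' t) volume c e :=
    hint.continuousOn_smul (by fun_prop)
  simp_rw [hkernel]
  rw [intervalIntegral.integral_sub (f := fun t => (1 / 4 : ℝ) • f''' t)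
      (g := fun t => ((e - c) ^ 2)⁻¹ • (((e - t) ^ 2 / 2) • f''' t))
      (hint.smul _) (hrem.smul _),
    intervalIntegral.integral_smul, intervalIntegral.integral_smul,
    integral_eq_sub_of_hasDerivWithinAt_of_uIcc_subset hs hf'' hint,
    taylor_integral_remainder_two hs hf hf' hf'' hint, oneSidedConsistencyError]

theorem norm_oneSidedConsistencyError_le (hs : uIcc c e ⊆ s)
    (hf : ∀ t ∈ s, HasDerivWithinAt f (f' t) s t)
    (hf' : ∀ t ∈ s, HasDerivWithinAt f' (f'' t) s t)
    (hf'' : ∀ t ∈ s, HasDerivWithinAt f'' (f''' t) s t)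
    (hint : IntervalIntegrable f''' volume c e) :
    ‖oneSidedConsistencyError f f' f'' c e‖ ≤ 1 / 4 * |∫ t in c..e, ‖f''' t‖| := by
  rw [oneSidedConsistencyError_eq_integral hs hf hf' hf'' hint,
    ← abs_of_pos (by norm_num : (0 : ℝ) < 1 / 4), ← abs_mul,
    ← intervalIntegral.integral_const_mul]
  refine norm_integral_le_abs_of_norm_le ?_ (hint.norm.const_mul _)
  refine ae_restrict_of_forall_mem measurableSet_uIoc fun t ht => ?_
  rw [norm_smul, Real.norm_eq_abs]
  exact mul_le_mul_of_nonneg_right (abs_consistencyKernel_le (uIoc_subset_uIcc ht))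
    (norm_nonneg _)

theorem norm_consistencyError_le {h : ℝ} (hh : 0 < h) (hs : Icc (c - h) (c + h) ⊆ s)
    (hf : ∀ t ∈ s, HasDerivWithinAt f (f' t) s t)
    (hf' : ∀ t ∈ s, HasDerivWithinAt f' (f'' t) s t)
    (hf'' : ∀ t ∈ s, HasDerivWithinAt f'' (f''' t) s t) (hcont : ContinuousOn f''' s) :
    ‖consistencyError f f'' c h‖ ≤ 1 / 4 * ∫ t in c - h..c + h, ‖f''' t‖ := by
  have hsr : uIcc c (c + h) ⊆ s :=
    (uIcc_of_le (by linarith)).trans_subset (Icc_subset_Icc_left (by linarith)) |>.trans hs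
  have hsl : uIcc c (c - h) ⊆ s :=
    (uIcc_of_ge (by linarith)).trans_subset (Icc_subset_Icc_right (by linarith)) |>.trans hs
  have hright := norm_oneSidedConsistencyError_le hsr hf hf' hf''
    (hcont.mono hsr).intervalIntegrable
  have hleft := norm_oneSidedConsistencyError_le hsl hf hf' hf''
    (hcont.mono hsl).intervalIntegrable
  rw [abs_of_nonneg (integral_nonneg (by linarith) fun t _ => norm_nonneg _)] at hright
  rw [integral_symm, abs_neg,
    abs_of_nonneg (integral_nonneg (by linarith) fun t _ => norm_nonneg _)] at hleft
  rw [consistencyError_eq_add (f' := f') hh.ne', ← integral_add_adjacent_intervals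
    (hcont.mono hsl).norm.intervalIntegrable.symm (hcont.mono hsr).norm.intervalIntegrable]
  exact (norm_add_le _ _).trans (by linarith)

theorem norm_consistencyError_sq_le {h : ℝ} (hh : 0 < h) (hs : Icc (c - h) (c + h) ⊆ s)
    (hf : ∀ t ∈ s, HasDerivWithinAt f (f' t) s t)
    (hf' : ∀ t ∈ s, HasDerivWithinAt f' (f'' t) s t)
    (hf'' : ∀ t ∈ s, HasDerivWithinAt f'' (f''' t) s t) (hcont : ContinuousOn f''' s) :
    ‖consistencyError f f'' c h‖ ^ 2 ≤ h / 8 * ∫ t in c - h..c + h, ‖f''' t‖ ^ 2 := by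
  have hnorm := (hcont.mono ((uIcc_of_le (by linarith)).trans_subset hs)).norm
  have hcs := sq_intervalIntegral_le (by linarith) hnorm.intervalIntegrable
    (hnorm.pow 2).intervalIntegrable
  have hbound := norm_consistencyError_le hh hs hf hf' hf'' hcont
  calc ‖consistencyError f f'' c h‖ ^ 2
      ≤ (1 / 4 * ∫ t in c - h..c + h, ‖f''' t‖) ^ 2 := by gcongr
    _ ≤ h / 8 * ∫ t in c - h..c + h, ‖f''' t‖ ^ 2 := by
      rw [mul_pow]
      linarith

end ConsistencyError

/-- Aggregated first-order consistency estimate of Lemma 3.4 of the paper: there is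
a universal constant `c > 0` such that for every real Hilbert space, every time step
`Δt = T/M` and every `C³` function `f : [0,T] → H`,
`Δt Σ_{m=1}^{M−1} ‖s_m‖² ≤ c Δt² ∫₀^T ‖f'''‖²`, where `s_m` is the consistency error
of the (1/4, 1/2, 1/4) scheme. -/
theorem stmt11 :
    ∃ c : ℝ, 0 < c ∧
      ∀ (H : Type) [inst₁ : NormedAddCommGroup H] [inst₂ : InnerProductSpace ℝ H]
        [inst₃ : CompleteSpace H],
        ∀ (T : ℝ), 0 < T → ∀ (M : ℕ), 2 ≤ M →
        ∀ (f f' f'' f''' : ℝ → H),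
          (∀ s ∈ Set.Icc (0 : ℝ) T, HasDerivWithinAt f (f' s) (Set.Icc 0 T) s) →
          (∀ s ∈ Set.Icc (0 : ℝ) T, HasDerivWithinAt f' (f'' s) (Set.Icc 0 T) s) →
          (∀ s ∈ Set.Icc (0 : ℝ) T, HasDerivWithinAt f'' (f''' s) (Set.Icc 0 T) s) →
          ContinuousOn f''' (Set.Icc 0 T) →
          (T / M) * ∑ m ∈ Finset.Icc 1 (M - 1),
              ‖(1 / 4 : ℝ) • f'' (((m : ℝ) + 1) * (T / M))
                  + (1 / 2 : ℝ) • f'' ((m : ℝ) * (T / M))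
                  + (1 / 4 : ℝ) • f'' (((m : ℝ) - 1) * (T / M))
                  - (((T / M) ^ 2)⁻¹ : ℝ) •
                      (f (((m : ℝ) + 1) * (T / M)) - (2 : ℝ) • f ((m : ℝ) * (T / M))
                        + f (((m : ℝ) - 1) * (T / M)))‖ ^ 2
            ≤ c * (T / M) ^ 2 * ∫ s in (0 : ℝ)..T, ‖f''' s‖ ^ 2 := by
  refine ⟨1 / 4, by norm_num, fun H _ _ _ T hT M hM f f' f'' f''' hf hf' hf'' hcont => ?_⟩
  set h := T / M
  have hh : 0 < h := by positivity
  have hT_eq : (M : ℝ) * h = T := by simp only [h]; field_simp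
  have hnode : ∀ m ∈ Finset.Icc 1 (M - 1), ‖consistencyError f f'' (m * h) h‖ ^ 2
      ≤ h / 8 * ∫ t in (m : ℝ) * h - h..(m : ℝ) * h + h, ‖f''' t‖ ^ 2 := by
    intro m hm
    obtain ⟨hm1, hmM⟩ := Finset.mem_Icc.mp hm
    have hm1' : (1 : ℝ) ≤ m := by exact_mod_cast hm1
    have hmM' : (m : ℝ) + 1 ≤ M := by exact_mod_cast (by omega : m + 1 ≤ M)
    refine norm_consistencyError_sq_le hh (Icc_subset_Icc ?_ ?_) hf hf' hf'' hcont <;> nlinarith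
  calc _ = h * ∑ m ∈ Finset.Icc 1 (M - 1), ‖consistencyError f f'' (m * h) h‖ ^ 2 := by
        simp only [consistencyError, add_mul, sub_mul, one_mul]
    _ ≤ h * ∑ m ∈ Finset.Icc 1 (M - 1),
          h / 8 * ∫ t in (m : ℝ) * h - h..(m : ℝ) * h + h, ‖f''' t‖ ^ 2 := by
        gcongr with m hm
        exact hnode m hm
    _ = h ^ 2 / 8 * ∑ m ∈ Finset.Icc 1 (M - 1),
          ∫ t in (m : ℝ) * h - h..(m : ℝ) * h + h, ‖f''' t‖ ^ 2 := by
        rw [← Finset.mul_sum]; ring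
    _ ≤ h ^ 2 / 8 * (2 * ∫ t in (0 : ℝ)..M * h, ‖f''' t‖ ^ 2) := by
        gcongr
        refine sum_integral_overlapping_cells_le hh.le (fun t => by positivity) ?_
        rw [hT_eq]
        exact (hcont.norm.pow 2).intervalIntegrable_of_Icc hT.le
    _ = 1 / 4 * h ^ 2 * ∫ t in (0 : ℝ)..T, ‖f''' t‖ ^ 2 := by rw [hT_eq]; ring
end

section
/- Let X be a finite-dimensional real vector space and let A, B : X × X → ℝ be symmetric positive semidefinite bilinear forms. Let T > 0, let M ≥ 2 be an integer, Δt = T/M, and let p_0, p_1, …, p_M ∈ X and r_1, …, r_{M−1} ∈ X satisfy, for every m = 1, …, M−1 and every v ∈ X, B( (p_{m+1} − 2 p_m + p_{m−1})/Δt², v ) + A( (p_{m+1} + 2 p_m + p_{m−1})/4, v ) = B(r_m, v). Write ∂p_{m+1/2} = (p_{m+1} − p_m)/Δt and p_{m+1/2} = (p_{m+1} + p_m)/2. Then for every j = 0, 1, …, M−1: B(∂p_{j+1/2}, ∂p_{j+1/2}) + A(p_{j+1/2}, p_{j+1/2}) ≤ 2 ( B(∂p_{1/2}, ∂p_{1/2})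 + A(p_{1/2}, p_{1/2}) ) + 4 T · Δt · Σ_{m=1}^{M−1} B(r_m, r_m). -/
/-!
Testing the scheme at step `m` with the centered difference `p_{m+1} - p_{m-1}` turns it into the
exact energy balance `E_m = E_{m-1} + B(r_m, p_{m+1} - p_{m-1})`, where
`E_j = B(∂p_{j+1/2}, ∂p_{j+1/2}) + A(p_{j+1/2}, p_{j+1/2})`. Writing
`p_{m+1} - p_{m-1} = Δt (∂p_{m+1/2} + ∂p_{m-1/2})` and applying Young's inequality with weight `2T`
bounds the increment by `2TΔt B(r_m, r_m) + Δt S / (2T)`, where `S` is the maximal energy.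
Summing up to the step where the maximum is attained gives `S ≤ E_0 + 2TΔt ∑ B(r_m, r_m) + S / 2`.
-/

section DiscreteEnergy

variable {X : Type*} [AddCommGroup X] [Module ℝ X]

lemma two_mul_apply_le_mul_add_inv_mul (B : X →ₗ[ℝ] X →ₗ[ℝ] ℝ)
    (hBsymm : ∀ u v : X, B u v = B v u) (hBpos : ∀ v : X, 0 ≤ B v v)
    {t : ℝ} (ht : 0 < t) (u v : X) :
    2 * B u v ≤ t * B u u + t⁻¹ * B v v := by
  have h := hBpos (t • u - v)
  simp only [map_sub, map_smul, LinearMap.sub_apply, LinearMap.smul_apply, smul_eq_mul,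
    hBsymm v u] at h
  rw [← mul_le_mul_iff_of_pos_left ht]
  field_simp
  nlinarith

noncomputable def discreteEnergy (A B : X →ₗ[ℝ] X →ₗ[ℝ] ℝ) (dt : ℝ) (p : ℕ → X) (j : ℕ) : ℝ :=
  B (dt⁻¹ • (p (j + 1) - p j)) (dt⁻¹ • (p (j + 1) - p j))
    + A ((1 / 2 : ℝ) • (p (j + 1) + p j)) ((1 / 2 : ℝ) • (p (j + 1) + p j))

lemma discreteEnergy_succ_eq (A B : X →ₗ[ℝ] X →ₗ[ℝ] ℝ)
    (hAsymm : ∀ u v : X, A u v = A v u) (hBsymm : ∀ u v : X, B u v = B v u)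
    {dt : ℝ} (hdt : dt ≠ 0) (p : ℕ → X) (n : ℕ) (ρ : X)
    (H : ∀ v : X, B ((dt ^ 2)⁻¹ • (p (n + 2) - (2 : ℝ) • p (n + 1) + p n)) v
        + A ((1 / 4 : ℝ) • (p (n + 2) + (2 : ℝ) • p (n + 1) + p n)) v = B ρ v) :
    discreteEnergy A B dt p (n + 1) = discreteEnergy A B dt p n + B ρ (p (n + 2) - p n) := by
  have h := H (p (n + 2) - p n)
  simp only [discreteEnergy, map_add, map_sub, map_smul, LinearMap.add_apply,
    LinearMap.sub_apply, LinearMap.smul_apply, smul_eq_mul] at h ⊢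
  simp only [hBsymm (p (n + 1)) (p (n + 2)), hBsymm (p n) (p (n + 2)), hBsymm (p n) (p (n + 1)),
    hAsymm (p (n + 1)) (p (n + 2)), hAsymm (p n) (p (n + 2)), hAsymm (p n) (p (n + 1))] at h ⊢
  field_simp at h ⊢
  linear_combination h

lemma discreteEnergy_succ_le (A B : X →ₗ[ℝ] X →ₗ[ℝ] ℝ)
    (hAsymm : ∀ u v : X, A u v = A v u) (hBsymm : ∀ u v : X, B u v = B v u)
    (hApos : ∀ v : X, 0 ≤ A v v) (hBpos : ∀ v : X, 0 ≤ B v v)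
    {dt t : ℝ} (hdt : 0 < dt) (ht : 0 < t) (p : ℕ → X) (n : ℕ) (ρ : X)
    (H : ∀ v : X, B ((dt ^ 2)⁻¹ • (p (n + 2) - (2 : ℝ) • p (n + 1) + p n)) v
        + A ((1 / 4 : ℝ) • (p (n + 2) + (2 : ℝ) • p (n + 1) + p n)) v = B ρ v) :
    discreteEnergy A B dt p (n + 1) ≤ discreteEnergy A B dt p n + dt * (t * B ρ ρ
      + (discreteEnergy A B dt p n + discreteEnergy A B dt p (n + 1)) / (2 * t)) := by
  set d₀ := dt⁻¹ • (p (n + 1) - p n)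
  set d₁ := dt⁻¹ • (p (n + 2) - p (n + 1))
  have hsplit : p (n + 2) - p n = dt • (d₁ + d₀) := by
    rw [← smul_add, smul_smul, mul_inv_cancel₀ hdt.ne', one_smul]
    abel
  have hd₀ : B d₀ d₀ ≤ discreteEnergy A B dt p n := le_add_of_nonneg_right (hApos _)
  have hd₁ : B d₁ d₁ ≤ discreteEnergy A B dt p (n + 1) := le_add_of_nonneg_right (hApos _)
  have hyoung : B ρ d₁ + B ρ d₀
      ≤ t * B ρ ρ + (discreteEnergy A B dt p n + discreteEnergy A B dt p (n + 1)) / (2 * t) := by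
    have hy₀ := two_mul_apply_le_mul_add_inv_mul B hBsymm hBpos ht ρ d₀
    have hy₁ := two_mul_apply_le_mul_add_inv_mul B hBsymm hBpos ht ρ d₁
    have ht' : 0 ≤ t⁻¹ := inv_nonneg.2 ht.le
    have hsum : (discreteEnergy A B dt p n + discreteEnergy A B dt p (n + 1)) / (2 * t)
        = (t⁻¹ * discreteEnergy A B dt p n + t⁻¹ * discreteEnergy A B dt p (n + 1)) / 2 := by
      field_simp
    rw [hsum]
    linarith [mul_le_mul_of_nonneg_left hd₀ ht', mul_le_mul_of_nonneg_left hd₁ ht']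
  calc discreteEnergy A B dt p (n + 1)
      = discreteEnergy A B dt p n + dt * (B ρ d₁ + B ρ d₀) := by
        rw [discreteEnergy_succ_eq A B hAsymm hBsymm hdt.ne' p n ρ H, hsplit, map_smul, map_add,
          smul_eq_mul]
    _ ≤ _ := by gcongr

end DiscreteEnergy

lemma le_add_sum_of_succ_le {E f : ℕ → ℝ} {j : ℕ} (h : ∀ n < j, E (n + 1) ≤ E n + f n) :
    E j ≤ E 0 + ∑ n ∈ Finset.range j, f n := by
  have := Finset.sum_le_sum fun n hn => sub_le_iff_le_add'.2 (h n (Finset.mem_range.1 hn))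
  rw [Finset.sum_range_sub] at this
  linarith

lemma le_two_mul_add_of_succ_le_add_mean {E c : ℕ → ℝ} {N : ℕ} {τ T : ℝ} (hT : 0 < T)
    (hτ : 0 ≤ τ) (hNτ : N * τ ≤ T) (hE : ∀ n, 0 ≤ E n) (hc : ∀ n, 0 ≤ c n)
    (h : ∀ n, n + 1 < N →
      E (n + 1) ≤ E n + τ * (2 * T * c n + (E n + E (n + 1)) / (2 * (2 * T)))) :
    ∀ j < N, E j ≤ 2 * E 0 + 4 * T * τ * ∑ n ∈ Finset.range (N - 1), c n := by
  intro j hj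
  obtain ⟨j₀, hj₀, hmax⟩ := Finset.exists_max_image (Finset.range N) E
    ⟨0, Finset.mem_range.2 (by omega)⟩
  have hj₀N : j₀ < N := Finset.mem_range.1 hj₀
  have hstep : ∀ n < j₀, E (n + 1) ≤ E n + (2 * T * τ * c n + τ / (2 * T) * E j₀) := by
    intro n hn
    have hmean : (E n + E (n + 1)) / (2 * (2 * T)) ≤ E j₀ / (2 * T) := by
      rw [div_le_div_iff₀ (by positivity) (by positivity)]
      nlinarith [hmax n (Finset.mem_range.2 (by omega)),
        hmax (n + 1) (Finset.mem_range.2 (by omega))]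
    calc E (n + 1) ≤ E n + τ * (2 * T * c n + (E n + E (n + 1)) / (2 * (2 * T))) := h n (by omega)
      _ ≤ E n + τ * (2 * T * c n + E j₀ / (2 * T)) := by gcongr
      _ = _ := by ring
  have hS := le_add_sum_of_succ_le hstep
  rw [Finset.sum_add_distrib, ← Finset.mul_sum, Finset.sum_const, Finset.card_range,
    nsmul_eq_mul] at hS
  have hc₀ : ∑ n ∈ Finset.range j₀, c n ≤ ∑ n ∈ Finset.range (N - 1), c n :=
    Finset.sum_le_sum_of_subset_of_nonneg (Finset.range_subset_range.2 (by omega))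
      fun n _ _ => hc n
  have habsorb : (j₀ : ℝ) * (τ / (2 * T) * E j₀) ≤ E j₀ / 2 := by
    have hj₀τ : (j₀ : ℝ) * τ ≤ T := le_trans (by gcongr) hNτ
    rw [show (j₀ : ℝ) * (τ / (2 * T) * E j₀) = j₀ * τ * E j₀ / (2 * T) by ring,
      div_le_div_iff₀ (by positivity) (by positivity)]
    nlinarith [hE j₀]
  have := mul_le_mul_of_nonneg_left hc₀ (by positivity : 0 ≤ 2 * T * τ)
  linarith [hmax j (Finset.mem_range.2 hj)]

theorem stmt13_general {X : Type*} [AddCommGroup X] [Module ℝ X]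
    (A B : X →ₗ[ℝ] X →ₗ[ℝ] ℝ)
    (hAsymm : ∀ u v : X, A u v = A v u) (hBsymm : ∀ u v : X, B u v = B v u)
    (hApos : ∀ v : X, 0 ≤ A v v) (hBpos : ∀ v : X, 0 ≤ B v v)
    (T : ℝ) (hT : 0 < T) (M : ℕ)
    (p : ℕ → X) (r : ℕ → X)
    (heq : ∀ m ∈ Finset.Icc 1 (M - 1), ∀ v : X,
      B ((((T / M) ^ 2)⁻¹ : ℝ) • (p (m + 1) - (2 : ℝ) • p m + p (m - 1))) v
        + A ((1 / 4 : ℝ) • (p (m + 1) + (2 : ℝ) • p m + p (m - 1))) v = B (r m) v) :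
    ∀ j ∈ Finset.range M,
      B (((T / M)⁻¹ : ℝ) • (p (j + 1) - p j)) (((T / M)⁻¹ : ℝ) • (p (j + 1) - p j))
          + A ((1 / 2 : ℝ) • (p (j + 1) + p j)) ((1 / 2 : ℝ) • (p (j + 1) + p j))
        ≤ 2 * (B (((T / M)⁻¹ : ℝ) • (p 1 - p 0)) (((T / M)⁻¹ : ℝ) • (p 1 - p 0))
                + A ((1 / 2 : ℝ) • (p 1 + p 0)) ((1 / 2 : ℝ) • (p 1 + p 0)))
          + 4 * T * (T / M) * ∑ m ∈ Finset.Icc 1 (M - 1), B (r m) (r m) := by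
  intro j hj
  have hM₀ : (0 : ℝ) < M := Nat.cast_pos.2 (Nat.zero_lt_of_lt (Finset.mem_range.1 hj))
  have hdt : 0 < T / M := div_pos hT hM₀
  have hsource : ∑ n ∈ Finset.range (M - 1), B (r (n + 1)) (r (n + 1))
      = ∑ m ∈ Finset.Icc 1 (M - 1), B (r m) (r m) := by
    rw [Finset.range_eq_Ico, Finset.sum_Ico_add' (fun m => B (r m) (r m)), zero_add,
      Finset.Ico_add_one_right_eq_Icc]
  rw [← hsource]
  refine le_two_mul_add_of_succ_le_add_mean (E := discreteEnergy A B (T / M) p) hT hdt.le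
    (mul_div_cancel₀ T hM₀.ne').le (fun n => add_nonneg (hBpos _) (hApos _)) (fun n => hBpos _)
    (fun n hn => ?_) j (Finset.mem_range.1 hj)
  exact discreteEnergy_succ_le A B hAsymm hBsymm hApos hBpos hdt (by positivity) p n (r (n + 1))
    (heq (n + 1) (Finset.mem_Icc.2 ⟨by omega, by omega⟩))

/-- Discrete energy estimate at the core of Lemma 3.4 of the paper for the fully
discrete two-level implicit scheme with weights (1/4, 1/2, 1/4): `A` is the
stiffness form and `B` the mass form, both symmetric positive semidefinite, on a
finite dimensional space. -/
theorem stmt13 {X : Type*} [AddCommGroup X] [Module ℝ X] [FiniteDimensional ℝ X]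
    (A B : X →ₗ[ℝ] X →ₗ[ℝ] ℝ)
    (hAsymm : ∀ u v : X, A u v = A v u) (hBsymm : ∀ u v : X, B u v = B v u)
    (hApos : ∀ v : X, 0 ≤ A v v) (hBpos : ∀ v : X, 0 ≤ B v v)
    (T : ℝ) (hT : 0 < T) (M : ℕ) (hM : 2 ≤ M)
    (p : ℕ → X) (r : ℕ → X)
    (heq : ∀ m ∈ Finset.Icc 1 (M - 1), ∀ v : X,
      B ((((T / M) ^ 2)⁻¹ : ℝ) • (p (m + 1) - (2 : ℝ) • p m + p (m - 1))) v
        + A ((1 / 4 : ℝ) • (p (m + 1) + (2 : ℝ) • p m + p (m - 1))) v = B (r m) v) :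
    ∀ j ∈ Finset.range M,
      B (((T / M)⁻¹ : ℝ) • (p (j + 1) - p j)) (((T / M)⁻¹ : ℝ) • (p (j + 1) - p j))
          + A ((1 / 2 : ℝ) • (p (j + 1) + p j)) ((1 / 2 : ℝ) • (p (j + 1) + p j))
        ≤ 2 * (B (((T / M)⁻¹ : ℝ) • (p 1 - p 0)) (((T / M)⁻¹ : ℝ) • (p 1 - p 0))
                + A ((1 / 2 : ℝ) • (p 1 + p 0)) ((1 / 2 : ℝ) • (p 1 + p 0)))
          + 4 * T * (T / M) * ∑ m ∈ Finset.Icc 1 (M - 1), B (r m) (r m) :=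
  stmt13_general A B hAsymm hBsymm hApos hBpos T hT M p r heq
end

section
/- Let d ≥ 1, ε > 0. For x ∈ ℝ^d write ⌊x⌋ ∈ ℤ^d for the componentwise integer part and {x} = x − ⌊x⌋ ∈ [0,1)^d. Let Φ : ℝ^d × ℝ^d → ℝ be measurable with ∫_{ℝ^d} ∫_{[0,1)^d} |Φ(x,y)| dy dx < ∞. Define U^ε(Φ)(x) = ∫_{[0,1)^d} Φ( ε⌊x/ε⌋ + ε t, {x/ε} ) dt. Then U^ε(Φ) is integrable on ℝ^d and ∫_{ℝ^d} U^ε(Φ)(x) dx = ∫_{ℝ^d} ∫_{[0,1)^d} Φ(x,y) dy dx. -/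
/-!
The integrand on the left is `Φ ∘ S_ε` integrated over `t`, where
`S_ε (x, t) = (ε⌊x/ε⌋ + εt, {x/ε})`, so by Fubini both claims follow once `S_ε` preserves
the measure `dx ⊗ dy|_{[0,1)^d}`. Conjugating by the dilation `x ↦ x/ε`, which only rescales
Lebesgue measure, reduces this to `ε = 1`. On the cell `⌊x⌋ = n` the map `S_1` is
`(x, t) ↦ (t + n, x - n)`: a swap of the two factors followed by translations exchanging the
cell with `[0,1)^d`. Summing over `n ∈ ℤ^d` gives the claim.
-/

open MeasureTheory Set

theorem MeasureTheory.Measure.eq_sum_restrict_fiber {α β : Type*} [MeasurableSpace α]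
    [MeasurableSpace β] [Countable β] [MeasurableSingletonClass β] {f : α → β}
    (hf : Measurable f) (μ : Measure α) :
    μ = Measure.sum fun b => μ.restrict (f ⁻¹' {b}) := by
  rw [← Measure.restrict_iUnion (pairwise_disjoint_fiber f)
    fun b => hf (measurableSet_singleton b), ← preimage_iUnion, iUnion_of_singleton,
    preimage_univ, Measure.restrict_univ]

theorem MeasureTheory.MeasurePreserving.integral_comp_of_aestronglyMeasurable
    {α β E : Type*} [MeasurableSpace α] [MeasurableSpace β] [NormedAddCommGroup E]
    [NormedSpace ℝ E] {μ : Measure α} {ν : Measure β} {f : α → β} {g : β → E}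
    (hf : MeasurePreserving f μ ν) (hg : AEStronglyMeasurable g ν) :
    ∫ x, g (f x) ∂μ = ∫ y, g y ∂ν := by
  rw [← hf.map_eq] at hg ⊢
  exact (integral_map hf.aemeasurable hg).symm

noncomputable section

namespace PeriodicUnfolding

variable {ι : Type*}

def unitCube (ι : Type*) : Set (ι → ℝ) := univ.pi fun _ => Ico 0 1

theorem measurableSet_unitCube [Countable ι] : MeasurableSet (unitCube ι) :=
  .univ_pi fun _ => measurableSet_Ico

def intFloor (x : ι → ℝ) : ι → ℤ := fun i => ⌊x i⌋

theorem measurable_intFloor [Countable ι] : Measurable (intFloor : (ι → ℝ) → ι → ℤ) :=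
  measurable_pi_lambda _ fun i => Int.measurable_floor.comp (measurable_pi_apply i)

theorem sub_mem_unitCube_iff {x : ι → ℝ} {n : ι → ℤ} :
    x - (fun i => (n i : ℝ)) ∈ unitCube ι ↔ intFloor x = n := by
  simp only [unitCube, mem_univ_pi, mem_Ico, Pi.sub_apply, sub_nonneg, sub_lt_iff_lt_add',
    funext_iff, intFloor, Int.floor_eq_iff]

def unitUnfoldingMap (p : (ι → ℝ) × (ι → ℝ)) : (ι → ℝ) × (ι → ℝ) :=
  (fun i => ⌊p.1 i⌋ + p.2 i, fun i => Int.fract (p.1 i))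

theorem measurable_unitUnfoldingMap :
    Measurable (unitUnfoldingMap : (ι → ℝ) × (ι → ℝ) → (ι → ℝ) × (ι → ℝ)) := by
  unfold unitUnfoldingMap
  fun_prop

theorem unitUnfoldingMap_eq_of_intFloor_eq {x : ι → ℝ} {n : ι → ℤ} (hx : intFloor x = n)
    (t : ι → ℝ) :
    unitUnfoldingMap (x, t) = (t + fun i => (n i : ℝ), x - fun i => (n i : ℝ)) := by
  subst hx
  ext i
  exacts [add_comm _ _, rfl]

variable [Fintype ι]

theorem measurePreserving_unitUnfoldingMap_restrict_fiber (n : ι → ℤ) :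
    MeasurePreserving unitUnfoldingMap
      ((volume.restrict (intFloor ⁻¹' {n})).prod (volume.restrict (unitCube ι)))
      ((volume.restrict (intFloor ⁻¹' {n})).prod (volume.restrict (unitCube ι))) := by
  set v : ι → ℝ := fun i => n i
  have hsub : MeasurePreserving (· - v) (volume.restrict (intFloor ⁻¹' {n}))
      (volume.restrict (unitCube ι)) := by
    have := (measurePreserving_sub_right volume v).restrict_preimage measurableSet_unitCube
    rwa [show (· - v) ⁻¹' unitCube ι = intFloor ⁻¹' {n} from
      Set.ext fun x => sub_mem_unitCube_iff] at this
  have hadd : MeasurePreserving (· + v) (volume.restrict (unitCube ι))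
      (volume.restrict (intFloor ⁻¹' {n})) := by
    have := (measurePreserving_add_right volume v).restrict_preimage
      (measurable_intFloor (measurableSet_singleton n))
    rwa [show (· + v) ⁻¹' (intFloor ⁻¹' {n}) = unitCube ι from
      Set.ext fun t => by simp [← sub_mem_unitCube_iff, v]] at this
  refine ((hadd.prod hsub).comp Measure.measurePreserving_swap).congr
    measurable_unitUnfoldingMap ?_
  filter_upwards [Measure.quasiMeasurePreserving_fst.ae
    (ae_restrict_mem (measurable_intFloor (measurableSet_singleton n)))] with p hp
  exact (unitUnfoldingMap_eq_of_intFloor_eq hp p.2).symm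

theorem measurePreserving_unitUnfoldingMap :
    MeasurePreserving unitUnfoldingMap (volume.prod (volume.restrict (unitCube ι)))
      (volume.prod (volume.restrict (unitCube ι))) := by
  have hvol := congrArg (·.prod (volume.restrict (unitCube ι)))
    (Measure.eq_sum_restrict_fiber measurable_intFloor (volume : Measure (ι → ℝ)))
  refine ⟨measurable_unitUnfoldingMap, ?_⟩
  rw [hvol, Measure.prod_sum_left, Measure.map_sum measurable_unitUnfoldingMap.aemeasurable]
  exact congrArg Measure.sum <| funext fun n =>
    (measurePreserving_unitUnfoldingMap_restrict_fiber n).map_eq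

def unfoldingMap (ε : ℝ) (p : (ι → ℝ) × (ι → ℝ)) : (ι → ℝ) × (ι → ℝ) :=
  (fun i => ε * ⌊p.1 i / ε⌋ + ε * p.2 i, fun i => Int.fract (p.1 i / ε))

theorem measurePreserving_unfoldingMap {ε : ℝ} (hε : ε ≠ 0) :
    MeasurePreserving (unfoldingMap ε) (volume.prod (volume.restrict (unitCube ι)))
      (volume.prod (volume.restrict (unitCube ι))) := by
  set e : (ι → ℝ) × (ι → ℝ) ≃ᵐ (ι → ℝ) × (ι → ℝ) :=
    (MeasurableEquiv.smul₀ ε⁻¹ (inv_ne_zero hε)).prodCongr (MeasurableEquiv.refl _)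
  -- the dilation rescales the measure by some constant `c`, which cancels under conjugation
  obtain ⟨c, hc⟩ :
      ∃ c : ENNReal, Measure.map (ε⁻¹ • ·) (volume : Measure (ι → ℝ)) = c • volume :=
    ⟨_, Measure.map_addHaar_smul volume (inv_ne_zero hε)⟩
  have he : MeasurePreserving e (volume.prod (volume.restrict (unitCube ι)))
      (c • volume.prod (volume.restrict (unitCube ι))) := by
    rw [← Measure.prod_smul_left]
    exact (MeasurePreserving.mk (measurable_const_smul _) hc).prod (.id _)
  have heq : unfoldingMap ε = e.symm ∘ unitUnfoldingMap ∘ e := by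
    funext p
    ext i
    · change ε * ⌊p.1 i / ε⌋ + ε * p.2 i = ε⁻¹⁻¹ * (⌊ε⁻¹ * p.1 i⌋ + p.2 i)
      rw [inv_inv, div_eq_inv_mul, mul_add]
    · change Int.fract (p.1 i / ε) = Int.fract (ε⁻¹ * p.1 i)
      rw [div_eq_inv_mul]
  rw [heq]
  exact (he.symm e).comp ((measurePreserving_unitUnfoldingMap.smul_measure c).comp he)

end PeriodicUnfolding

end

open PeriodicUnfolding

open MeasureTheory in
theorem stmt14_general (d : ℕ) (ε : ℝ) (hε : 0 < ε)
    (Φ : (Fin d → ℝ) → (Fin d → ℝ) → ℝ)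
    (hint : Integrable (Function.uncurry Φ)
      (volume.prod (volume.restrict (Set.univ.pi fun _ : Fin d => Set.Ico (0 : ℝ) 1)))) :
    Integrable (fun x : Fin d → ℝ =>
        ∫ t in Set.univ.pi fun _ : Fin d => Set.Ico (0 : ℝ) 1,
          Φ (fun i => ε * (⌊x i / ε⌋ : ℝ) + ε * t i) (fun i => Int.fract (x i / ε))) volume ∧
    (∫ x : Fin d → ℝ,
        ∫ t in Set.univ.pi fun _ : Fin d => Set.Ico (0 : ℝ) 1,
          Φ (fun i => ε * (⌊x i / ε⌋ : ℝ) + ε * t i) (fun i => Int.fract (x i / ε)))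
      = ∫ x : Fin d → ℝ, ∫ y in Set.univ.pi fun _ : Fin d => Set.Ico (0 : ℝ) 1, Φ x y := by
  have hS := measurePreserving_unfoldingMap (ι := Fin d) hε.ne'
  have hΦS := hS.integrable_comp_of_integrable hint
  refine ⟨hΦS.integral_prod_left, ?_⟩
  calc _ = ∫ p, Function.uncurry Φ (unfoldingMap ε p)
          ∂(volume.prod (volume.restrict (unitCube (Fin d)))) :=
        integral_integral (f := fun x t => Function.uncurry Φ (unfoldingMap ε (x, t))) hΦS
    _ = ∫ p, Function.uncurry Φ p ∂(volume.prod (volume.restrict (unitCube (Fin d)))) :=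
        hS.integral_comp_of_aestronglyMeasurable hint.aestronglyMeasurable
    _ = _ := (integral_integral hint).symm

open MeasureTheory in
/-- The integral identity (6.1) of the paper for the two-scale folding (unfolding)
operator `U^ε(Φ)(x) = ∫_{[0,1)^d} Φ(ε⌊x/ε⌋ + εt, {x/ε}) dt`: for an integrable
`Φ : ℝ^d × [0,1)^d → ℝ`, `U^ε(Φ)` is integrable and
`∫_{ℝ^d} U^ε(Φ) = ∫_{ℝ^d} ∫_{[0,1)^d} Φ`. -/
theorem stmt14 (d : ℕ) (hd : 1 ≤ d) (ε : ℝ) (hε : 0 < ε)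
    (Φ : (Fin d → ℝ) → (Fin d → ℝ) → ℝ)
    (hmeas : Measurable (Function.uncurry Φ))
    (hint : Integrable (Function.uncurry Φ)
      (volume.prod (volume.restrict (Set.univ.pi fun _ : Fin d => Set.Ico (0 : ℝ) 1)))) :
    Integrable (fun x : Fin d → ℝ =>
        ∫ t in Set.univ.pi fun _ : Fin d => Set.Ico (0 : ℝ) 1,
          Φ (fun i => ε * (⌊x i / ε⌋ : ℝ) + ε * t i) (fun i => Int.fract (x i / ε))) volume ∧
    (∫ x : Fin d → ℝ,
        ∫ t in Set.univ.pi fun _ : Fin d => Set.Ico (0 : ℝ) 1,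
          Φ (fun i => ε * (⌊x i / ε⌋ : ℝ) + ε * t i) (fun i => Int.fract (x i / ε)))
      = ∫ x : Fin d → ℝ, ∫ y in Set.univ.pi fun _ : Fin d => Set.Ico (0 : ℝ) 1, Φ x y :=
  stmt14_general d ε hε Φ hint
end
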